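/- arXiv:2410.09617 — 2 statements merged into one kernel-verified Lean document; each statement's English description precedes it below -/
import Mathlib

section
/- Let k ≥ 2 be an integer, let h be a graph parameter and suppose the Turán-type function g = g_h is strongly k-ESS. Then g is strongly k-ESS with respect to every suitable partition with abstract chromatic number k: for every suitable partition (𝓐,𝓕) of the class of all finite graphs with abstract chromatic number k and every ε > 0, there exists N such that for every n ≥ N we have (1−ε)·h(T(n,k−1)) ≤ g(n,(𝓐,𝓕)) ≤ (1+ε)·h(T(n,k−1)). -/
open SimpleGraph

/-- A family of finite graphs, given for each `n` as a predicate on graphs on `Fin n`. -/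
abbrev GraphFamily := ∀ n : ℕ, SimpleGraph (Fin n) → Prop

/-- `G` contains a copy of `F` as a (not necessarily induced) subgraph:
there is an injective map of vertices sending edges to edges. -/
def ContainsCopy {α β : Type} (G : SimpleGraph α) (F : SimpleGraph β) : Prop :=
  ∃ f : β → α, Function.Injective f ∧ ∀ ⦃u v⦄, F.Adj u v → G.Adj (f u) (f v)

/-- Membership of a graph on an arbitrary vertex type in a family, up to isomorphism. -/
def MemFam (𝓐 : GraphFamily) {β : Type} (G : SimpleGraph β) : Prop :=
  ∃ (n : ℕ) (H : SimpleGraph (Fin n)), Nonempty (G ≃g H) ∧ 𝓐 n H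

/-- The family is closed under isomorphism. -/
def IsoClosed (𝓐 : GraphFamily) : Prop :=
  ∀ (n : ℕ) (G G' : SimpleGraph (Fin n)), Nonempty (G ≃g G') → 𝓐 n G → 𝓐 n G'

/-- The complete multipartite graph with part sizes `m 0, …, m (r-1)`. -/
def completeMultipartite {r : ℕ} (m : Fin r → ℕ) : SimpleGraph (Σ i, Fin (m i)) :=
  completeMultipartiteGraph (fun i => Fin (m i))

/-- `(𝓐, 𝓐ᶜ)` is a suitable partition, witnessed by the integer `k ≥ 2`: for all
sufficiently large `n`, every complete `(k-1)`-partite graph with all parts of size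
at least `n` belongs to `𝓐`, and no graph in `𝓐` contains the Turán graph `T(n,k)`
as a subgraph. -/
def SuitableWith (𝓐 : GraphFamily) (k : ℕ) : Prop :=
  2 ≤ k ∧ ∃ N : ℕ, ∀ n, N ≤ n →
    ((∀ m : Fin (k - 1) → ℕ, (∀ i, n ≤ m i) → MemFam 𝓐 (completeMultipartite m)) ∧
     ∀ (n' : ℕ) (G : SimpleGraph (Fin n')), 𝓐 n' G → ¬ ContainsCopy G (turanGraph n k))

/-- A partition `(𝓐, 𝓐ᶜ)` is suitable: either complete graphs are eventually in `𝓐`,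
or some `k ≥ 2` witnesses suitability. -/
def Suitable (𝓐 : GraphFamily) : Prop :=
  (∃ N : ℕ, ∀ n, N ≤ n → 𝓐 n ⊤) ∨ ∃ k : ℕ, SuitableWith 𝓐 k

/-- Every complete `r`-partite graph with all parts sufficiently large is in `𝓐`. -/
def AllBigMultipartiteIn (𝓐 : GraphFamily) (r : ℕ) : Prop :=
  ∃ N : ℕ, ∀ m : Fin r → ℕ, (∀ i, N ≤ m i) → MemFam 𝓐 (completeMultipartite m)

/-- The partition `(𝓐, 𝓐ᶜ)` has (finite) abstract chromatic number `k`: complete graphs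
are not eventually in `𝓐`, and `k` is the largest integer such that every complete
`(k-1)`-partite graph with all parts sufficiently large is in `𝓐`. -/
def HasAbsChromNum (𝓐 : GraphFamily) (k : ℕ) : Prop :=
  (¬ ∃ N : ℕ, ∀ n, N ≤ n → 𝓐 n ⊤) ∧
  AllBigMultipartiteIn 𝓐 (k - 1) ∧
  ∀ j : ℕ, k ≤ j → ¬ AllBigMultipartiteIn 𝓐 j

/-- A graph parameter: a real value for every finite graph. -/
abbrev GraphParam := ∀ n : ℕ, SimpleGraph (Fin n) → ℝ

/-- A graph parameter is isomorphism-invariant and nonnegative. -/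
def IsGraphParam (h : GraphParam) : Prop :=
  (∀ (n : ℕ) (G G' : SimpleGraph (Fin n)), Nonempty (G ≃g G') → h n G = h n G') ∧
  ∀ (n : ℕ) (G : SimpleGraph (Fin n)), 0 ≤ h n G

/-- `g(n, F)`: the maximum of `h` over `F`-free graphs on `n` vertices. -/
noncomputable def exRel (h : GraphParam) (n : ℕ) {β : Type} (F : SimpleGraph β) : ℝ :=
  sSup {x : ℝ | ∃ G : SimpleGraph (Fin n), ¬ ContainsCopy G F ∧ h n G = x}

/-- `g(n, (𝓐, 𝓐ᶜ))`: the maximum of `h` over `n`-vertex graphs in `𝓐`. -/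
noncomputable def exFam (h : GraphParam) (𝓐 : GraphFamily) (n : ℕ) : ℝ :=
  sSup {x : ℝ | ∃ G : SimpleGraph (Fin n), 𝓐 n G ∧ h n G = x}

/-- `G` is a complete `r`-partite graph (some parts possibly empty). -/
def IsCompMultipartite {n : ℕ} (G : SimpleGraph (Fin n)) (r : ℕ) : Prop :=
  ∃ m : Fin r → ℕ, Nonempty (G ≃g completeMultipartite m)

/-- `g_h` is weakly `k`-ESS. -/
def WeaklyESS (h : GraphParam) (k : ℕ) : Prop :=
  ∀ (nF : ℕ) (F : SimpleGraph (Fin nF)), F.chromaticNumber = (k : ℕ∞) →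
    ∀ ε : ℝ, 0 < ε → ∃ N : ℕ, ∀ n, N ≤ n →
      ∃ T : SimpleGraph (Fin n), IsCompMultipartite T (k - 1) ∧
        (1 - ε) * h n T ≤ exRel h n F ∧ exRel h n F ≤ (1 + ε) * h n T

/-- `g_h` is strongly `k`-ESS. -/
def StronglyESS (h : GraphParam) (k : ℕ) : Prop :=
  ∀ (nF : ℕ) (F : SimpleGraph (Fin nF)), F.chromaticNumber = (k : ℕ∞) →
    ∀ ε : ℝ, 0 < ε → ∃ N : ℕ, ∀ n, N ≤ n →
      (1 - ε) * h n (turanGraph n (k - 1)) ≤ exRel h n F ∧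
        exRel h n F ≤ (1 + ε) * h n (turanGraph n (k - 1))

/-- The edit distance between two graphs on the same vertex set: the size of the
symmetric difference of the edge sets. -/
noncomputable def editDist {n : ℕ} (G T : SimpleGraph (Fin n)) : ℕ :=
  (symmDiff G.edgeSet T.edgeSet).ncard

/-- `g_h` is weakly `k`-ESS-stable. -/
def WeaklyESSStable (h : GraphParam) (k : ℕ) : Prop :=
  WeaklyESS h k ∧
  ∀ (nF : ℕ) (F : SimpleGraph (Fin nF)), F.chromaticNumber = (k : ℕ∞) →
    ∀ ε : ℝ, 0 < ε → ∃ δ : ℝ, 0 < δ ∧ ∃ N : ℕ, ∀ n, N ≤ n →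
      ∀ G : SimpleGraph (Fin n), ¬ ContainsCopy G F →
        (1 - δ) * exRel h n F ≤ h n G →
        ∃ T : SimpleGraph (Fin n), IsCompMultipartite T (k - 1) ∧
          (editDist G T : ℝ) ≤ ε * (n : ℝ) ^ 2

/-- `g_h` is strongly `k`-ESS-stable. -/
def StronglyESSStable (h : GraphParam) (k : ℕ) : Prop :=
  StronglyESS h k ∧
  ∀ (nF : ℕ) (F : SimpleGraph (Fin nF)), F.chromaticNumber = (k : ℕ∞) →
    ∀ ε : ℝ, 0 < ε → ∃ δ : ℝ, 0 < δ ∧ ∃ N : ℕ, ∀ n, N ≤ n →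
      ∀ G : SimpleGraph (Fin n), ¬ ContainsCopy G F →
        (1 - δ) * exRel h n F ≤ h n G →
        (editDist G (turanGraph n (k - 1)) : ℝ) ≤ ε * (n : ℝ) ^ 2

/-- `σ(F)`: the smallest size of a color class among all proper `k`-colorings of `F`. -/
noncomputable def graphSigma {nF : ℕ} (F : SimpleGraph (Fin nF)) (k : ℕ) : ℕ :=
  sInf {t : ℕ | ∃ C : F.Coloring (Fin k), ∃ i : Fin k,
    (Finset.univ.filter fun v => C v = i).card = t}

/-- Part sizes obtained from `m` by adding `t` parts of size `1` (adding `t`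
universal vertices to the complete multipartite graph with parts `m`). -/
def addUniversal (t : ℕ) {r : ℕ} (m : Fin r → ℕ) : Fin (t + r) → ℕ :=
  fun i => if h : (i : ℕ) < t then 1 else m ⟨(i : ℕ) - t, by have := i.isLt; omega⟩

/-- `T(n, r, t)`: the Turán graph `T(n - t, r)` together with `t` universal vertices
(the vertices with value `< t`). -/
def turanPlus (n r t : ℕ) : SimpleGraph (Fin n) :=
  SimpleGraph.fromRel fun x y =>
    (x : ℕ) < t ∨ ((x : ℕ) - t) % r ≠ ((y : ℕ) - t) % r

/-- `T⁺(n, r)`: the Turán graph `T(n, r)` with one extra edge (between `r - 1` and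
`2r - 1`) inside one of its smallest parts (the residue class of `r - 1`). -/
def turanPlusEdge (n r : ℕ) : SimpleGraph (Fin n) :=
  SimpleGraph.fromRel fun x y =>
    (x : ℕ) % r ≠ (y : ℕ) % r ∨ ((x : ℕ) = r - 1 ∧ (y : ℕ) = 2 * r - 1)

/-- `σ(𝓐, 𝓐ᶜ)`: the smallest minimum part size (= σ) of a complete `k`-partite graph,
with all `k` parts nonempty, that is contained in no member of `𝓐`. -/
noncomputable def famSigma (𝓐 : GraphFamily) (k : ℕ) : ℕ :=
  sInf {t : ℕ | ∃ m : Fin k → ℕ, (∀ i, 1 ≤ m i) ∧ (∃ i, m i = t ∧ ∀ j, m i ≤ m j) ∧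
    ∀ (n : ℕ) (G : SimpleGraph (Fin n)), 𝓐 n G → ¬ ContainsCopy G (completeMultipartite m)}

/-- `g_h` is weakly `k`-ESS-sigma. -/
def WeaklyESSSigma (h : GraphParam) (k : ℕ) : Prop :=
  ∀ (nF : ℕ) (F : SimpleGraph (Fin nF)), F.chromaticNumber = (k : ℕ∞) →
    ∃ N : ℕ, ∀ n, N ≤ n → ∃ (m : Fin (k - 1) → ℕ) (T : SimpleGraph (Fin n)),
      Nonempty (T ≃g completeMultipartite (addUniversal (graphSigma F k - 1) m)) ∧
      exRel h n F = h n T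

/-- `g_h` is strongly `k`-ESS-sigma. -/
def StronglyESSSigma (h : GraphParam) (k : ℕ) : Prop :=
  ∀ (nF : ℕ) (F : SimpleGraph (Fin nF)), F.chromaticNumber = (k : ℕ∞) →
    ∃ N : ℕ, ∀ n, N ≤ n →
      exRel h n F = h n (turanPlus n (k - 1) (graphSigma F k - 1))

/-- The number of copies of `F` in `G`: subgraphs of `G` isomorphic to `F`. -/
noncomputable def copyCount {n : ℕ} {β : Type} (G : SimpleGraph (Fin n))
    (F : SimpleGraph β) : ℕ :=
  Nat.card {H : G.Subgraph // Nonempty (F ≃g H.coe)}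

/-- `g_h` is `k`-ESS-supersat. -/
def ESSSupersat (h : GraphParam) (k : ℕ) : Prop :=
  ∀ (nF : ℕ) (F : SimpleGraph (Fin nF)), F.chromaticNumber = (k : ℕ∞) →
    ∀ ε : ℝ, 0 < ε → ∃ δ : ℝ, 0 < δ ∧ ∃ N : ℕ, ∀ n, N ≤ n →
      ∀ G : SimpleGraph (Fin n), (1 + ε) * exRel h n F < h n G →
        δ * (n : ℝ) ^ nF ≤ (_root_.copyCount G F : ℝ)

/-- A proper edge-coloring of `G`, given as a symmetric function of the two endpoints:
edges sharing a vertex receive distinct colors. -/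
def ProperEdgeColoring {α C : Type} (G : SimpleGraph α) (c : α → α → C) : Prop :=
  (∀ u v, c u v = c v u) ∧
  ∀ u v w, G.Adj u v → G.Adj u w → v ≠ w → c u v ≠ c u w

/-- The edge-colored graph `(G, c)` contains a rainbow copy of `F`. -/
def HasRainbowCopy {α β C : Type} (G : SimpleGraph α) (c : α → α → C)
    (F : SimpleGraph β) : Prop :=
  ∃ f : β → α, Function.Injective f ∧ (∀ ⦃u v⦄, F.Adj u v → G.Adj (f u) (f v)) ∧
    ∀ u v u' v', F.Adj u v → F.Adj u' v' → s(u, v) ≠ s(u', v') →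
      c (f u) (f v) ≠ c (f u') (f v')

/-- The family `𝓐` is hereditary: closed under taking induced subgraphs
(equivalently, under induced-subgraph embeddings). -/
def Hereditary (𝓐 : GraphFamily) : Prop :=
  ∀ (n n' : ℕ) (G : SimpleGraph (Fin n)) (G' : SimpleGraph (Fin n')),
    𝓐 n G → Nonempty (G' ↪g G) → 𝓐 n' G'

/-- The family `𝓐` is monotone: closed under taking subgraphs. -/
def MonotoneFam (𝓐 : GraphFamily) : Prop :=
  ∀ (n n' : ℕ) (G : SimpleGraph (Fin n)) (G' : SimpleGraph (Fin n')),
    𝓐 n G → ContainsCopy G G' → 𝓐 n' G'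

/-- `(𝓐, 𝓐ᶜ)` is an edge-critical partition with abstract chromatic number `k`. -/
def EdgeCritical (𝓐 : GraphFamily) (k : ℕ) : Prop :=
  Suitable 𝓐 ∧ HasAbsChromNum 𝓐 k ∧
  ∃ N : ℕ, ∀ n, N ≤ n → ∀ (n' : ℕ) (G : SimpleGraph (Fin n')), 𝓐 n' G →
    ¬ ContainsCopy G (turanPlusEdge n (k - 1))

/-- The graph obtained from `G` by adding a new vertex (namely `none`) joined to all
neighbors of the vertex `v`. -/
def duplicateVertex {n : ℕ} (G : SimpleGraph (Fin n)) (v : Fin n) :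
    SimpleGraph (Option (Fin n)) :=
  SimpleGraph.fromRel fun x y =>
    match x, y with
    | some a, some b => G.Adj a b
    | none, some b => G.Adj v b
    | _, _ => False

/-- The graph parameter `h` is balanced for `k`. -/
def BalancedParam (h : GraphParam) (k : ℕ) : Prop :=
  ∃ a : ℝ, 0 < a ∧
    (∃ C : ℝ, 0 < C ∧ ∀ (n : ℕ) (G : SimpleGraph (Fin n)) (u v : Fin n),
      u ≠ v → ¬ G.Adj u v →
      |h n (G ⊔ SimpleGraph.fromEdgeSet {s(u, v)}) - h n G| ≤ C * (n : ℝ) ^ a) ∧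
    (∃ C : ℝ, 0 < C ∧ ∀ (n : ℕ) (G : SimpleGraph (Fin n)) (v : Fin n)
        (G'' : SimpleGraph (Fin (n + 1))), Nonempty (G'' ≃g duplicateVertex G v) →
      |h (n + 1) G'' - h n G| ≤ C * (n : ℝ) ^ (a + 1)) ∧
    (∀ c : ℝ, 0 < c → ∃ (n₀ : ℕ) (c₁ c₂ : ℝ), 0 < c₁ ∧ 0 < c₂ ∧
      ∀ n, n₀ ≤ n → ∀ m : Fin (k - 1) → ℕ, (∀ i, c * (n : ℝ) ≤ (m i : ℝ)) →
        ∀ G : SimpleGraph (Fin n), Nonempty (G ≃g completeMultipartite m) →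
          ((∀ u v : Fin n, u ≠ v → ¬ G.Adj u v →
              c₁ * (n : ℝ) ^ a ≤ h n (G ⊔ SimpleGraph.fromEdgeSet {s(u, v)}) - h n G ∧
              h n (G ⊔ SimpleGraph.fromEdgeSet {s(u, v)}) - h n G ≤ c₂ * (n : ℝ) ^ a) ∧
           (∀ (v : Fin n) (G'' : SimpleGraph (Fin (n + 1))),
              Nonempty (G'' ≃g duplicateVertex G v) →
              c₁ * (n : ℝ) ^ (a + 1) ≤ h (n + 1) G'' - h n G ∧
              h (n + 1) G'' - h n G ≤ c₂ * (n : ℝ) ^ (a + 1)))) ∧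
    (∀ c : ℝ, 0 < c → ∃ (n₀ : ℕ) (c₁ c₂ : ℝ), 0 < c₁ ∧ 0 < c₂ ∧
      ∀ n, n₀ ≤ n → ∀ m : Fin (k - 1) → ℕ, (∀ i, c * (n : ℝ) ≤ (m i : ℝ)) →
        ∀ G : SimpleGraph (Fin n), Nonempty (G ≃g completeMultipartite m) →
          ∀ G''' : SimpleGraph (Fin n), G''' ≤ G →
            c₁ * ((G.edgeSet.ncard - G'''.edgeSet.ncard : ℕ) : ℝ) * (n : ℝ) ^ a ≤
              h n G - h n G''' ∧
            h n G - h n G''' ≤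
              c₂ * ((G.edgeSet.ncard - G'''.edgeSet.ncard : ℕ) : ℝ) * (n : ℝ) ^ a)

/-! The witness `k'` of suitability must equal `k`: if `k' > k`, the large complete
`(k' - 1)`-partite graphs in `𝓐` contradict the maximality of `k`; if `k' < k`, a large
complete `(k - 1)`-partite graph in `𝓐` contains `T(N, k')`. Hence, for large `n`, `T(n, k - 1)`
is isomorphic to a member of `𝓐`, which gives the lower bound, and every member of `𝓐` is
`T(M, k)`-free for one fixed `M ≥ k`, so `g(n, (𝓐, 𝓕)) ≤ g(n, T(M, k))`; since `T(M, k)` has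
chromatic number `k`, strong `k`-ESS gives the upper bound. -/

lemma containsCopy_iff_isContained {α β : Type} {G : SimpleGraph α} {F : SimpleGraph β} :
    ContainsCopy G F ↔ F ⊑ G :=
  ⟨fun ⟨f, hf, hadj⟩ => ⟨⟨⟨f, fun huv => hadj huv⟩, hf⟩⟩,
    fun ⟨c⟩ => ⟨c, c.injective, fun _ _ huv => c.toHom.map_adj huv⟩⟩

namespace SimpleGraph

variable {α ι κ : Type*} {G : SimpleGraph α}

def isoCompleteMultipartiteGraphFibers (f : α → ι) (hf : ∀ u v, G.Adj u v ↔ f u ≠ f v) :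
    G ≃g completeMultipartiteGraph (fun i => {v // f v = i}) where
  toEquiv := (Equiv.sigmaFiberEquiv f).symm
  map_rel_iff' := by simp [hf]

def completeMultipartiteGraph.congrRight {V W : ι → Type*} (e : ∀ i, V i ≃ W i) :
    completeMultipartiteGraph V ≃g completeMultipartiteGraph W where
  toEquiv := Equiv.sigmaCongrRight e
  map_rel_iff' := by simp

lemma completeMultipartiteGraph_isContained {V : ι → Type*} {W : κ → Type*} (g : ι ↪ κ)
    (e : ∀ i, V i ↪ W (g i)) : completeMultipartiteGraph V ⊑ completeMultipartiteGraph W :=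
  ⟨⟨⟨Sigma.map g fun i => e i, fun huv => by simpa [Sigma.map] using huv⟩,
    g.injective.sigma_map fun i => (e i).injective⟩⟩

end SimpleGraph

lemma turanGraph_iso_completeMultipartite {r : ℕ} (n : ℕ) (hr : 0 < r) :
    ∃ m : Fin r → ℕ, (∀ i, n / r ≤ m i) ∧ (∀ i, m i ≤ n) ∧
      Nonempty (turanGraph n r ≃g completeMultipartite m) := by
  let f : Fin n → Fin r := fun v => ⟨v % r, Nat.mod_lt _ hr⟩
  have hf : ∀ u v, (turanGraph n r).Adj u v ↔ f u ≠ f v := by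
    simp [turanGraph_adj, f, Fin.ext_iff]
  refine ⟨fun i => Fintype.card {v // f v = i}, fun i => ?_,
    fun i => by simpa using Fintype.card_subtype_le (f · = i),
    ⟨(isoCompleteMultipartiteGraphFibers f hf).trans
      (completeMultipartiteGraph.congrRight fun i => Fintype.equivFin _)⟩⟩
  -- the `j`-th vertex of part `i` is `j * r + i`
  have hlt : ∀ j : Fin (n / r), (j : ℕ) * r + i < n := fun j => by
    have := (Nat.le_div_iff_mul_le hr).1 j.isLt
    rw [Nat.succ_mul] at this
    omega
  simpa using Fintype.card_le_of_injective
    (fun j : Fin (n / r) => (⟨⟨j * r + i, hlt j⟩, by simp [f, Nat.mod_eq_of_lt]⟩ :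
      {v // f v = i}))
    (fun j j' hjj' => by simpa [Fin.ext_iff, hr.ne'] using hjj')

lemma chromaticNumber_turanGraph {n r : ℕ} (hr : 0 < r) (hrn : r ≤ n) :
    (turanGraph n r).chromaticNumber = r := by
  obtain ⟨m, hm, -, ⟨e⟩⟩ := turanGraph_iso_completeMultipartite n hr
  have hpos : ∀ i, 0 < m i := fun i => (Nat.div_pos hrn hr).trans_le (hm i)
  rw [chromaticNumber_congr e, completeMultipartite,
    completeMultipartiteGraph.chromaticNumber _ fun i => ⟨0, hpos i⟩, Fintype.card_fin]

lemma turanGraph_isContained_completeMultipartite {r s M : ℕ} (hr : 0 < r) (hrs : r ≤ s)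
    {m : Fin s → ℕ} (hm : ∀ i, M ≤ m i) : turanGraph M r ⊑ completeMultipartite m := by
  obtain ⟨m', -, hm', ⟨e⟩⟩ := turanGraph_iso_completeMultipartite M hr
  exact e.isContained.trans (completeMultipartiteGraph_isContained (Fin.castLEEmb hrs)
    fun i => Fin.castLEEmb ((hm' i).trans (hm _)))

section Family

variable {𝓐 : GraphFamily}

lemma MemFam.of_iso {α β : Type} {G : SimpleGraph α} {G' : SimpleGraph β} (e : G ≃g G')
    (hG' : MemFam 𝓐 G') : MemFam 𝓐 G :=
  let ⟨n, H, ⟨e'⟩, hH⟩ := hG'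
  ⟨n, H, ⟨e.trans e'⟩, hH⟩

lemma MemFam.exists_mem_iso {n : ℕ} {G : SimpleGraph (Fin n)} (hG : MemFam 𝓐 G) :
    ∃ H : SimpleGraph (Fin n), 𝓐 n H ∧ Nonempty (G ≃g H) := by
  obtain ⟨n', H, ⟨e⟩, hH⟩ := hG
  obtain rfl : n = n' := Fin.equiv_iff_eq.1 ⟨e.toEquiv⟩
  exact ⟨H, hH, ⟨e⟩⟩

lemma AllBigMultipartiteIn.eventually_memFam_turanGraph {r : ℕ}
    (hA : AllBigMultipartiteIn 𝓐 r) (hr : 0 < r) :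
    ∃ N, ∀ n, N ≤ n → MemFam 𝓐 (turanGraph n r) := by
  obtain ⟨N, hN⟩ := hA
  refine ⟨N * r, fun n hn => ?_⟩
  obtain ⟨m, hm, -, ⟨e⟩⟩ := turanGraph_iso_completeMultipartite n hr
  exact (hN m fun i => ((Nat.le_div_iff_mul_le hr).2 hn).trans (hm i)).of_iso e

lemma Suitable.suitableWith_of_hasAbsChromNum {k : ℕ} (hS : Suitable 𝓐)
    (hA : HasAbsChromNum 𝓐 k) : SuitableWith 𝓐 k := by
  obtain ⟨hnotTop, ⟨N₀, hN₀⟩, hmax⟩ := hA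
  obtain hTop | ⟨k', hk', N₁, hN₁⟩ := hS
  · exact absurd hTop hnotTop
  obtain rfl : k' = k := by
    refine le_antisymm (not_lt.1 fun hlt => hmax (k' - 1) (by omega) ⟨N₁, (hN₁ N₁ le_rfl).1⟩)
      (not_lt.1 fun hlt => ?_)
    obtain ⟨n, H, ⟨e⟩, hH⟩ := hN₀ (fun _ => max N₀ N₁) fun _ => le_max_left _ _
    refine (hN₁ N₁ le_rfl).2 n H hH (containsCopy_iff_isContained.2 ?_)
    exact (turanGraph_isContained_completeMultipartite (by omega) (by omega)
      fun _ => le_max_right _ _).trans e.isContained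
  exact ⟨hk', N₁, hN₁⟩

variable {h : GraphParam} {n : ℕ}

lemma bddAbove_setOf_exists_eq (P : SimpleGraph (Fin n) → Prop) :
    BddAbove {x : ℝ | ∃ G, P G ∧ h n G = x} :=
  (Set.finite_range (h n)).bddAbove.mono fun _ ⟨G, _, hG⟩ => Set.mem_range.2 ⟨G, hG⟩

lemma le_exFam {G : SimpleGraph (Fin n)} (hG : 𝓐 n G) : h n G ≤ exFam h 𝓐 n :=
  le_csSup (bddAbove_setOf_exists_eq _) ⟨G, hG, rfl⟩

lemma exFam_le_exRel {β : Type} {F : SimpleGraph β} (hne : ∃ G, 𝓐 n G)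
    (hfree : ∀ G, 𝓐 n G → ¬ ContainsCopy G F) : exFam h 𝓐 n ≤ exRel h n F :=
  let ⟨G, hG⟩ := hne
  csSup_le_csSup (bddAbove_setOf_exists_eq _) ⟨h n G, G, hG, rfl⟩
    fun _ ⟨G, hG, hx⟩ => ⟨G, hfree G hG, hx⟩

end Family

theorem stronglyESS_of_partition_general (k : ℕ) (h : GraphParam)
    (hparam : IsGraphParam h) (hESS : StronglyESS h k)
    (𝓐 : GraphFamily) (hsuit : Suitable 𝓐)
    (habs : HasAbsChromNum 𝓐 k) :
    ∀ ε : ℝ, 0 < ε → ∃ N : ℕ, ∀ n, N ≤ n →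
      (1 - ε) * h n (turanGraph n (k - 1)) ≤ exFam h 𝓐 n ∧
        exFam h 𝓐 n ≤ (1 + ε) * h n (turanGraph n (k - 1)) := by
  intro ε hε
  obtain ⟨hk, N₁, hN₁⟩ := hsuit.suitableWith_of_hasAbsChromNum habs
  set M := max N₁ k
  obtain ⟨N₂, hN₂⟩ := hESS M (turanGraph M k)
    (chromaticNumber_turanGraph (by omega) (le_max_right _ _)) ε hε
  obtain ⟨N₃, hN₃⟩ := habs.2.1.eventually_memFam_turanGraph (by omega : 0 < k - 1)
  refine ⟨max N₂ N₃, fun n hn => ?_⟩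
  obtain ⟨H, hH, ⟨e⟩⟩ := (hN₃ n (le_of_max_le_right hn)).exists_mem_iso
  have hlow : h n (turanGraph n (k - 1)) ≤ exFam h 𝓐 n :=
    (hparam.1 n _ H ⟨e⟩).trans_le (le_exFam hH)
  have hup : exFam h 𝓐 n ≤ exRel h n (turanGraph M k) :=
    exFam_le_exRel ⟨H, hH⟩ fun G hG => (hN₁ M (le_max_left _ _)).2 n G hG
  have hnonneg := hparam.2 n (turanGraph n (k - 1))
  exact ⟨by nlinarith, hup.trans (hN₂ n (le_of_max_le_left hn)).2⟩

/-- If `g_h` is strongly `k`-ESS, then `g_h` is strongly `k`-ESS with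
respect to every suitable partition with abstract chromatic number `k`. -/
theorem stronglyESS_of_partition (k : ℕ) (hk : 2 ≤ k) (h : GraphParam)
    (hparam : IsGraphParam h) (hESS : StronglyESS h k)
    (𝓐 : GraphFamily) (hiso : IsoClosed 𝓐) (hsuit : Suitable 𝓐)
    (habs : HasAbsChromNum 𝓐 k) :
    ∀ ε : ℝ, 0 < ε → ∃ N : ℕ, ∀ n, N ≤ n →
      (1 - ε) * h n (turanGraph n (k - 1)) ≤ exFam h 𝓐 n ∧
        exFam h 𝓐 n ≤ (1 + ε) * h n (turanGraph n (k - 1)) :=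
  stronglyESS_of_partition_general k h hparam hESS 𝓐 hsuit habs
end

section
/- Let F be a graph with chromatic number k ≥ 3 that has a color-critical edge (an edge whose deletion decreases the chromatic number). Then there exists N such that for all n ≥ N, every proper edge-coloring of T⁺(n,k−1) contains a rainbow copy of F, where T⁺(n,k−1) is the graph obtained from the Turán graph T(n,k−1) by adding one edge inside one of its smallest parts. -/
open SimpleGraph

/-! Colour `F - uv` properly with `r = k - 1` colours, permuted so that `u` gets colour `r - 1`,
and send every vertex into the residue class mod `r` of its colour: `u` to `r - 1` and `v` to
`j + r`, where `j` is the colour of `v`. These two are adjacent in `T⁺(n, r)`, through the extra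
edge when `j = r - 1`. The remaining vertices are placed greedily: when `w` joins the already
embedded set `S`, at most `|S|` candidates are occupied, and since the edge colouring is proper,
each neighbour `p` of `w` and each embedded edge `ab` forbid at most one candidate `x`, the one
with `c x p = c a b`. Residue classes have at least `n / r` elements, so
`n ≥ (|F| + |F|³ + 1) r` leaves room at every step. -/

open Finset

theorem SimpleGraph.colorable_sub_one_of_chromaticNumber_lt {V : Type*} {G : SimpleGraph V}
    {k : ℕ} (h : G.chromaticNumber < k) : G.Colorable (k - 1) := by
  cases k with
  | zero => simp at h
  | succ k =>
    rw [← chromaticNumber_le_iff_colorable]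
    exact ENat.lt_natCast_add_one_iff.mp (by simpa using h)

theorem turanPlusEdge_adj_of_mod_ne {n r : ℕ} {x y : Fin n} (h : (x : ℕ) % r ≠ (y : ℕ) % r) :
    (turanPlusEdge n r).Adj x y := by
  rw [turanPlusEdge, fromRel_adj]
  exact ⟨fun hxy => h (by rw [hxy]), Or.inl (Or.inl h)⟩

theorem turanPlusEdge_adj_pred_of_lt {n r j : ℕ} {x y : Fin n} (hx : (x : ℕ) = r - 1)
    (hy : (y : ℕ) = j + r) (hj : j < r) : (turanPlusEdge n r).Adj x y := by
  by_cases hjr : j = r - 1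
  · rw [turanPlusEdge, fromRel_adj]
    exact ⟨fun hxy => by omega, Or.inl (Or.inr ⟨hx, by omega⟩)⟩
  · apply turanPlusEdge_adj_of_mod_ne
    rw [hx, hy, Nat.add_mod_right, Nat.mod_eq_of_lt hj, Nat.mod_eq_of_lt (by omega)]
    omega

theorem le_card_filter_mod_eq {n r m i : ℕ} (hi : i < r) (hm : m * r ≤ n) :
    m ≤ #{x : Fin n | (x : ℕ) % r = i} := by
  have hlt : ∀ j < m, i + j * r < n := fun j hj => by nlinarith
  calc m = #((range m).attach.image fun j =>
        (⟨i + j.1 * r, hlt j.1 (mem_range.mp j.2)⟩ : Fin n)) := by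
        rw [card_image_of_injective _ fun j j' h => ?_, card_attach, card_range]
        simp only [Fin.mk.injEq, add_right_inj] at h
        exact Subtype.ext (Nat.eq_of_mul_eq_mul_right (by omega) h)
    _ ≤ #{x : Fin n | (x : ℕ) % r = i} := card_le_card fun x hx => by
        obtain ⟨j, -, rfl⟩ := mem_image.mp hx
        simp [Nat.mod_eq_of_lt hi]

section RainbowGreedy

variable {α β ι C : Type} {G : SimpleGraph α} {c : α → α → C} {F : SimpleGraph β}

theorem ProperEdgeColoring.card_filter_adj_color_eq_le_one [DecidableRel G.Adj] [DecidableEq C]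
    (hc : ProperEdgeColoring G c) (X : Finset α) (y : α) (κ : C) :
    #{x ∈ X | G.Adj x y ∧ c x y = κ} ≤ 1 := by
  rw [card_le_one]
  intro x₁ hx₁ x₂ hx₂
  obtain ⟨-, hadj₁, hc₁⟩ := mem_filter.mp hx₁
  obtain ⟨-, hadj₂, hc₂⟩ := mem_filter.mp hx₂
  by_contra hne
  refine hc.2 y x₁ x₂ hadj₁.symm hadj₂.symm hne ?_
  rw [hc.1 y, hc.1 y, hc₁, hc₂]

def IsRainbowCopyOn (G : SimpleGraph α) (c : α → α → C) (F : SimpleGraph β) (S : Finset β)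
    (f : β → α) : Prop :=
  Set.InjOn f S ∧ (∀ a ∈ S, ∀ b ∈ S, F.Adj a b → G.Adj (f a) (f b)) ∧
    ∀ a ∈ S, ∀ b ∈ S, ∀ a' ∈ S, ∀ b' ∈ S, F.Adj a b → F.Adj a' b' → s(a, b) ≠ s(a', b') →
      c (f a) (f b) ≠ c (f a') (f b')

theorem IsRainbowCopyOn.hasRainbowCopy [Fintype β] {f : β → α}
    (hf : IsRainbowCopyOn G c F univ f) : HasRainbowCopy G c F := by
  obtain ⟨hinj, hadj, hrainbow⟩ := hf
  refine ⟨f, Set.injOn_univ.mp (by simpa using hinj), fun a b hab => ?_, fun a b a' b' => ?_⟩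
  · exact hadj a (mem_univ a) b (mem_univ b) hab
  · exact hrainbow a (mem_univ a) b (mem_univ b) a' (mem_univ a') b' (mem_univ b')

theorem isRainbowCopyOn_pair [DecidableEq β] {u v : β} (huv : u ≠ v) {A B : α}
    (hAB : G.Adj A B) : IsRainbowCopyOn G c F {u, v} fun z => if z = u then A else B := by
  have hedge : ∀ a ∈ ({u, v} : Finset β), ∀ b ∈ ({u, v} : Finset β), F.Adj a b →
      s(a, b) = s(u, v) := by
    simp only [mem_insert, mem_singleton]
    rintro a (rfl | rfl) b (rfl | rfl) hab <;> first | exact absurd rfl hab.ne | simp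
  refine ⟨?_, ?_, fun a ha b hb a' ha' b' hb' hab hab' hne => ?_⟩
  · simp only [coe_insert, coe_singleton, Set.injOn_insert (Set.notMem_singleton_iff.mpr huv),
      Set.injOn_singleton, Set.image_singleton, if_neg huv.symm, true_and,
      Set.mem_singleton_iff]
    exact hAB.ne
  · simp only [mem_insert, mem_singleton]
    rintro a (rfl | rfl) b (rfl | rfl) hab <;> simp [huv.symm, hAB, hAB.symm] at hab ⊢
  · exact absurd ((hedge a ha b hb hab).trans (hedge a' ha' b' hb' hab').symm) hne

variable [DecidableEq β]

theorem IsRainbowCopyOn.insert_update (hc : ProperEdgeColoring G c) {S : Finset β} {f : β → α}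
    (hf : IsRainbowCopyOn G c F S f) {w : β} (hw : w ∉ S) {x : α} (hx : x ∉ f '' S)
    (hxadj : ∀ p ∈ S, F.Adj w p → G.Adj x (f p))
    (hxcolor : ∀ p ∈ S, F.Adj w p → ∀ a ∈ S, ∀ b ∈ S, c x (f p) ≠ c (f a) (f b)) :
    IsRainbowCopyOn G c F (insert w S) (Function.update f w x) := by
  set f' := Function.update f w x
  have hf'w : f' w = x := Function.update_self w x f
  have hf'S : ∀ p ∈ S, f' p = f p := fun p hp =>
    Function.update_of_ne (ne_of_mem_of_not_mem hp hw) x f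
  have hedge : ∀ a ∈ insert w S, ∀ b ∈ insert w S, F.Adj a b → (a ∈ S ∧ b ∈ S) ∨
      ∃ p ∈ S, F.Adj w p ∧ s(a, b) = s(w, p) ∧ G.Adj (f' a) (f' b) ∧
        c (f' a) (f' b) = c x (f p) := by
    intro a ha b hb hab
    rcases mem_insert.mp ha with rfl | haS <;> rcases mem_insert.mp hb with rfl | hbS
    · exact absurd rfl hab.ne
    · rw [hf'w, hf'S b hbS]
      exact Or.inr ⟨b, hbS, hab, rfl, hxadj b hbS hab, rfl⟩
    · rw [hf'w, hf'S a haS, hc.1]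
      exact Or.inr ⟨a, haS, hab.symm, Sym2.eq_swap, (hxadj a haS hab.symm).symm, rfl⟩
    · exact Or.inl ⟨haS, hbS⟩
  refine ⟨?_, fun a ha b hb hab => ?_, fun a ha b hb a' ha' b' hb' hab hab' hne => ?_⟩
  · have hfS : Set.EqOn f f' S := fun p hp => (hf'S p hp).symm
    rw [coe_insert, Set.injOn_insert (mod_cast hw), ← hfS.image_eq, hf'w]
    exact ⟨hf.1.congr hfS, hx⟩
  · rcases hedge a ha b hb hab with ⟨ha, hb⟩ | ⟨p, -, -, -, hadj, -⟩
    · rw [hf'S a ha, hf'S b hb]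
      exact hf.2.1 a ha b hb hab
    · exact hadj
  rcases hedge a ha b hb hab with ⟨ha, hb⟩ | ⟨p, hp, hwp, he, -, hcol⟩ <;>
    rcases hedge a' ha' b' hb' hab' with ⟨ha', hb'⟩ | ⟨p', hp', hwp', he', -, hcol'⟩
  · rw [hf'S a ha, hf'S b hb, hf'S a' ha', hf'S b' hb']
    exact hf.2.2 a ha b hb a' ha' b' hb' hab hab' hne
  · rw [hf'S a ha, hf'S b hb, hcol']
    exact (hxcolor p' hp' hwp' a ha b hb).symm
  · rw [hcol, hf'S a' ha', hf'S b' hb']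
    exact hxcolor p hp hwp a' ha' b' hb'
  · have hpp' : f p ≠ f p' := fun h => hne (by rw [he, he', hf.1 hp hp' h])
    rw [hcol, hcol']
    exact hc.2 x (f p) (f p') (hxadj p hp hwp) (hxadj p' hp' hwp') hpp'

theorem IsRainbowCopyOn.exists_extend (hc : ProperEdgeColoring G c)
    {S : Finset β} {f : β → α} (hf : IsRainbowCopyOn G c F S f) {w : β} (hw : w ∉ S)
    {X : Finset α} (hX : #S + #S ^ 3 < #X) (hXadj : ∀ p ∈ S, F.Adj w p → ∀ x ∈ X, G.Adj x (f p)) :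
    ∃ x ∈ X, IsRainbowCopyOn G c F (insert w S) (Function.update f w x) := by
  classical
  set bad := S.image f ∪ (S ×ˢ S ×ˢ S).biUnion fun t =>
    {x ∈ X | G.Adj x (f t.1) ∧ c x (f t.1) = c (f t.2.1) (f t.2.2)}
  have hbad : #bad ≤ #S + #S ^ 3 := by
    refine (card_union_le _ _).trans (add_le_add card_image_le ?_)
    calc _ ≤ ∑ _t ∈ S ×ˢ S ×ˢ S, 1 := card_biUnion_le.trans
          (sum_le_sum fun t _ => hc.card_filter_adj_color_eq_le_one X _ _)
      _ = #S ^ 3 := by simp [card_product, pow_three]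
  obtain ⟨x, hxX, hxbad⟩ : ∃ x ∈ X, x ∉ bad := exists_mem_notMem_of_card_lt_card (by omega)
  refine ⟨x, hxX, hf.insert_update hc hw (fun hx => hxbad ?_)
    (fun p hp hwp => hXadj p hp hwp x hxX) fun p hp hwp a ha b hb hcol => hxbad ?_⟩
  · obtain ⟨p, hp, rfl⟩ := hx
    exact mem_union_left _ (mem_image_of_mem f hp)
  · refine mem_union_right _ (mem_biUnion.mpr ⟨(p, a, b), by simp [hp, ha, hb], ?_⟩)
    exact mem_filter.mpr ⟨hxX, hXadj p hp hwp x hxX, hcol⟩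

theorem hasRainbowCopy_of_partition [Fintype α] [Fintype β] [DecidableEq ι]
    (hc : ProperEdgeColoring G c) (part : α → ι) (φ : β → ι)
    (hcross : ∀ x y, part x ≠ part y → G.Adj x y)
    (hbig : ∀ b, Fintype.card β + Fintype.card β ^ 3 < #{x | part x = φ b})
    {S₀ : Finset β} {f₀ : β → α} (hf₀ : IsRainbowCopyOn G c F S₀ f₀)
    (hpart₀ : ∀ a ∈ S₀, part (f₀ a) = φ a) (hφ : ∀ a b, F.Adj a b → a ∉ S₀ → φ a ≠ φ b) :
    HasRainbowCopy G c F := by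
  suffices ∀ T : Finset β, ∃ f, IsRainbowCopyOn G c F (S₀ ∪ T) f ∧
      ∀ a ∈ S₀ ∪ T, part (f a) = φ a by
    obtain ⟨f, hf, -⟩ := this univ
    exact (union_eq_right.mpr (subset_univ S₀) ▸ hf).hasRainbowCopy
  intro T
  induction T using Finset.induction_on with
  | empty => exact ⟨f₀, by simpa using hf₀, by simpa using hpart₀⟩
  | insert w T _ ih =>
    obtain ⟨f, hf, hpart⟩ := ih
    rw [union_insert]
    by_cases hw : w ∈ S₀ ∪ T
    · rw [insert_eq_of_mem hw]
      exact ⟨f, hf, hpart⟩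
    have hS : #(S₀ ∪ T) ≤ Fintype.card β := card_le_univ _
    obtain ⟨x, hx, hfx⟩ := hf.exists_extend hc hw (X := {x | part x = φ w})
      ((add_le_add hS (Nat.pow_le_pow_left hS 3)).trans_lt (hbig w))
      fun p hp hwp x hx => hcross x (f p) <| by
        rw [(mem_filter.mp hx).2, hpart p hp]
        exact hφ w p hwp fun hw₀ => hw (mem_union_left T hw₀)
    refine ⟨_, hfx, fun a ha => ?_⟩
    rcases eq_or_ne a w with rfl | haw
    · simpa using (mem_filter.mp hx).2
    · rw [Function.update_of_ne haw]
      exact hpart a ((mem_insert.mp ha).resolve_left haw)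

end RainbowGreedy

theorem hasRainbowCopy_turanPlusEdge {β C : Type} [Fintype β] [DecidableEq β]
    {F : SimpleGraph β} {n r : ℕ} {c : Fin n → Fin n → C}
    (hc : ProperEdgeColoring (turanPlusEdge n r) c) {u v : β} (huv : u ≠ v)
    (χ : (F.deleteEdges {s(u, v)}).Coloring (Fin r))
    (hn : (Fintype.card β + Fintype.card β ^ 3 + 1) * r ≤ n) :
    HasRainbowCopy (turanPlusEdge n r) c F := by
  have hr : 0 < r := (χ u).pos
  -- Recolor so that `u` lies in the class of `r - 1`, the class containing the extra edge.
  let φ : β → ℕ := fun a => Equiv.swap (χ u) ⟨r - 1, by omega⟩ (χ a)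
  have hφ_lt : ∀ a, φ a < r := fun a => Fin.is_lt _
  have hφu : φ u = r - 1 := by simp [φ]
  have h2r : 2 * r ≤ n := by
    have : 0 < Fintype.card β := Fintype.card_pos_iff.mpr ⟨u⟩
    exact (Nat.mul_le_mul_right r (by omega)).trans hn
  let A : Fin n := ⟨r - 1, by omega⟩
  let B : Fin n := ⟨φ v + r, by linarith [hφ_lt v]⟩
  refine hasRainbowCopy_of_partition hc (fun x => (x : ℕ) % r) φ
    (fun x y => turanPlusEdge_adj_of_mod_ne)
    (fun b => le_card_filter_mod_eq (hφ_lt b) hn)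
    (isRainbowCopyOn_pair huv (turanPlusEdge_adj_pred_of_lt (x := A) (y := B) rfl rfl (hφ_lt v)))
    (fun a ha => ?_) (fun a b hab ha => ?_)
  · rcases mem_insert.mp ha with rfl | ha
    · simp [A, hφu, Nat.mod_eq_of_lt (Nat.sub_lt hr one_pos)]
    · simp [mem_singleton.mp ha, huv.symm, B, Nat.mod_eq_of_lt (hφ_lt v)]
  · have hne : s(a, b) ≠ s(u, v) := fun h =>
      ha (by simp [Sym2.mem_iff.mp (h ▸ Sym2.mem_mk_left a b)])
    have hχ := χ.valid (deleteEdges_adj.mpr ⟨hab, hne⟩)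
    exact fun h => hχ ((Equiv.swap _ _).injective (Fin.ext h))

theorem rainbow_in_turanPlusEdge_general (k nF : ℕ)
    (F : SimpleGraph (Fin nF))
    (hcrit : ∃ u v : Fin nF, F.Adj u v ∧
      (F.deleteEdges {s(u, v)}).chromaticNumber < (k : ℕ∞)) :
    ∃ N : ℕ, ∀ n, N ≤ n → ∀ (C : Type) (c : Fin n → Fin n → C),
      ProperEdgeColoring (turanPlusEdge n (k - 1)) c →
      HasRainbowCopy (turanPlusEdge n (k - 1)) c F := by
  obtain ⟨u, v, huv, hχ⟩ := hcrit
  obtain ⟨χ⟩ := colorable_sub_one_of_chromaticNumber_lt hχ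
  refine ⟨(nF + nF ^ 3 + 1) * (k - 1), fun n hn C c hc => ?_⟩
  exact hasRainbowCopy_turanPlusEdge hc huv.ne χ (by simpa using hn)

/-- Let `F` have chromatic number `k ≥ 3` and a color-critical edge.
Then for all sufficiently large `n`, every proper edge-coloring of `T⁺(n, k-1)`
contains a rainbow copy of `F`. -/
theorem rainbow_in_turanPlusEdge (k nF : ℕ) (hk : 3 ≤ k)
    (F : SimpleGraph (Fin nF)) (hchi : F.chromaticNumber = (k : ℕ∞))
    (hcrit : ∃ u v : Fin nF, F.Adj u v ∧
      (F.deleteEdges {s(u, v)}).chromaticNumber < (k : ℕ∞)) :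
    ∃ N : ℕ, ∀ n, N ≤ n → ∀ (C : Type) (c : Fin n → Fin n → C),
      ProperEdgeColoring (turanPlusEdge n (k - 1)) c →
      HasRainbowCopy (turanPlusEdge n (k - 1)) c F :=
  rainbow_in_turanPlusEdge_general k nF F hcrit
end
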